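/- Every σ-rigid ring satisfies condition (C_σ) and is reduced; moreover a ring R is σ-rigid if and only if R is (σ,δ)-compatible and reduced. -/

import Mathlib

/-!
A σ-rigid ring is reduced: if a² = 0 then c := a σ(a) satisfies c σ(c) = a σ(a²) σ²(a) = 0, so
c = 0 and then a = 0. Reduced rings are reversible (ab = 0 forces (ba)² = b(ab)a = 0), and with
reversibility each of the products a σ(b), b a, a δ(b) can be moved into a position where rigidity
or reducedness kills it. Conversely, compatibility turns a σ(a) = 0 into a² = 0.
-/

/-- δ is a σ-derivation: δ(ab) = σ(a)δ(b) + δ(a)b. -/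
def IsSigmaDerivation {R : Type*} [Ring R] (σ : R →+* R) (δ : R →+ R) : Prop :=
  ∀ a b : R, δ (a * b) = σ a * δ b + δ a * b

/-- Condition (C_σ): a·σ(b) = 0 implies a·b = 0. -/
def CondC {R : Type*} [Ring R] (σ : R →+* R) : Prop :=
  ∀ a b : R, a * σ b = 0 → a * b = 0

/-- σ-rigid: a·σ(a) = 0 implies a = 0. -/
def SigmaRigid {R : Type*} [Ring R] (σ : R →+* R) : Prop :=
  ∀ a : R, a * σ a = 0 → a = 0

section Reduced

variable {M : Type*} [MonoidWithZero M]

theorem isReduced_of_mul_self_eq_zero (h : ∀ a : M, a * a = 0 → a = 0) : IsReduced M :=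
  (isReduced_iff_pow_one_lt 2 one_lt_two).2 fun a ha => h a (by rwa [← sq])

variable [IsReduced M]

theorem IsReduced.eq_zero_of_mul_self_eq_zero {a : M} (h : a * a = 0) : a = 0 :=
  IsReduced.eq_zero a ⟨2, by rwa [sq]⟩

theorem IsReduced.mul_eq_zero_symm {a b : M} (h : a * b = 0) : b * a = 0 :=
  IsReduced.eq_zero_of_mul_self_eq_zero <| by
    rw [mul_assoc, ← mul_assoc a, h, zero_mul, mul_zero]

end Reduced

namespace SigmaRigid

variable {R : Type*} [Ring R] {σ : R →+* R}

theorem isReduced (h : SigmaRigid σ) : IsReduced R := by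
  refine isReduced_of_mul_self_eq_zero fun a ha => h a (h (a * σ a) ?_)
  calc a * σ a * σ (a * σ a) = a * σ (a * a) * σ (σ a) := by simp only [map_mul, mul_assoc]
    _ = 0 := by rw [ha, map_zero, mul_zero, zero_mul]

theorem mul_map_eq_zero {a b : R} (h : SigmaRigid σ) (hab : a * b = 0) : a * σ b = 0 := by
  have := h.isReduced
  refine h _ ?_
  calc a * σ b * σ (a * σ b) = a * σ (b * a) * σ (σ b) := by simp only [map_mul, mul_assoc]
    _ = 0 := by rw [IsReduced.mul_eq_zero_symm hab, map_zero, mul_zero, zero_mul]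

theorem condC (h : SigmaRigid σ) : CondC σ := by
  have := h.isReduced
  intro a b hab
  refine IsReduced.mul_eq_zero_symm (h _ ?_)
  calc b * a * σ (b * a) = b * (a * σ b) * σ a := by simp only [map_mul, mul_assoc]
    _ = 0 := by rw [hab, mul_zero, zero_mul]

theorem mul_derivation_eq_zero {δ : R →+ R} (h : SigmaRigid σ) (hδ : IsSigmaDerivation σ δ)
    {a b : R} (hab : a * b = 0) : a * δ b = 0 := by
  have := h.isReduced
  have hδba : σ b * δ a + δ b * a = 0 := by
    rw [← hδ, IsReduced.mul_eq_zero_symm hab, map_zero]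
  have hδb : a * δ b * a = 0 := by
    calc a * δ b * a = a * (σ b * δ a + δ b * a) - a * σ b * δ a := by noncomm_ring
      _ = 0 := by rw [hδba, h.mul_map_eq_zero hab, mul_zero, zero_mul, sub_zero]
  refine IsReduced.eq_zero_of_mul_self_eq_zero ?_
  rw [← mul_assoc, hδb, zero_mul]

end SigmaRigid

theorem sigmaRigid_of_condC {R : Type*} [Ring R] [IsReduced R] {σ : R →+* R} (h : CondC σ) :
    SigmaRigid σ :=
  fun a ha => IsReduced.eq_zero_of_mul_self_eq_zero (h a a ha)

/-- Every σ-rigid ring satisfies (C_σ) and is reduced; and R is σ-rigid iff R is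
(σ,δ)-compatible and reduced. -/
theorem stmt18 {R : Type*} [Ring R] (σ : R →+* R) (δ : R →+ R)
    (hδ : IsSigmaDerivation σ δ) :
    (SigmaRigid σ → CondC σ ∧ IsReduced R) ∧
      (SigmaRigid σ ↔
        ((∀ a b : R, a * b = 0 ↔ a * σ b = 0) ∧
          (∀ a b : R, a * b = 0 → a * δ b = 0) ∧ IsReduced R)) := by
  refine ⟨fun h => ⟨h.condC, h.isReduced⟩, fun h => ?_, ?_⟩
  · exact ⟨fun a b => ⟨h.mul_map_eq_zero, h.condC a b⟩,
      fun a b => h.mul_derivation_eq_zero hδ, h.isReduced⟩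
  · rintro ⟨hσ, -, hred⟩
    exact sigmaRigid_of_condC fun a b => (hσ a b).2
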